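/- arXiv:2007.13830 — 3 statements merged into one kernel-verified Lean document; each statement's English description precedes it below -/
import Mathlib

section
/- Let a, b, c, d > 0 be real numbers and 4 < p < 6. Then the function g(t) = (a/2)t^2 + (b/4)t^4 - (c/p)t^p - (d/6)t^6 on [0,∞) attains a positive maximum at some t₀ > 0, and t₀ is the unique positive critical point of g; moreover g(t) < 0 for all sufficiently large t and g(t) > 0 for all sufficiently small t > 0. -/
/-!
Write `g'(t) = t³ ψ(t)` with `ψ(t) = a/t² + b - c t^(p-4) - d t²`. Since `p > 4`, `ψ` is strictly
decreasing on `(0, ∞)`, so `g` has at most one positive critical point. Near `0`,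
`g(t) = t² (a/2 + o(1))` is positive, and at infinity `g(t) = t⁶ (-d/6 + o(1))` is negative; hence
the continuous `g` attains a positive maximum on `[0, ∞)` at an interior point, which is critical.
-/

open Real Set Filter Topology

theorem ContinuousOn.exists_isMaxOn_Ici {α β : Type*} [LinearOrder α] [TopologicalSpace α]
    [ClosedIciTopology α] [LinearOrder β] [TopologicalSpace β] [ClosedIciTopology β]
    [CompactIccSpace β] [NoMinOrder β] {f : β → α} {a x₀ : β} (hf : ContinuousOn f (Ici a))
    (h₀ : a ≤ x₀) (h_atTop : ∀ᶠ x in atTop, f x ≤ f x₀) : ∃ x ∈ Ici a, IsMaxOn f (Ici a) x := by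
  have h_le : cocompact β ⊓ 𝓟 (Ici a) ≤ atTop :=
    calc cocompact β ⊓ 𝓟 (Ici a) ≤ (atBot ⊔ atTop) ⊓ 𝓟 (Ici a) :=
          inf_le_inf_right _ cocompact_le_atBot_atTop
      _ = atTop ⊓ 𝓟 (Ici a) := by
          rw [inf_sup_right, (disjoint_atBot_principal_Ici a).eq_bot, bot_sup_eq]
      _ ≤ atTop := inf_le_left
  exact hf.exists_isMaxOn' isClosed_Ici h₀ (h_le h_atTop)

noncomputable def fiberMap (a b c d p t : ℝ) : ℝ :=
  a / 2 * t ^ 2 + b / 4 * t ^ 4 - c / p * t ^ p - d / 6 * t ^ 6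

noncomputable def fiberSlope (a b c d p t : ℝ) : ℝ := a / t ^ 2 + b - c * t ^ (p - 4) - d * t ^ 2

section
variable {a b c d p : ℝ}

theorem continuous_fiberMap (hp : 0 ≤ p) : Continuous (fiberMap a b c d p) := by
  unfold fiberMap
  fun_prop (disch := exact fun _ => Or.inr hp)

theorem hasDerivAt_fiberMap (hp : p ≠ 0) {t : ℝ} (ht : 0 < t) :
    HasDerivAt (fiberMap a b c d p) (t ^ 3 * fiberSlope a b c d p t) t := by
  have h := ((((hasDerivAt_pow 2 t).const_mul (a / 2)).add
    ((hasDerivAt_pow 4 t).const_mul (b / 4))).sub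
    ((hasDerivAt_rpow_const (p := p) (Or.inl ht.ne')).const_mul (c / p))).sub
    ((hasDerivAt_pow 6 t).const_mul (d / 6))
  refine h.congr_deriv ?_
  have h_split : t ^ (p - 1) = t ^ 3 * t ^ (p - 4) := by
    rw [mul_comm, ← rpow_add_natCast ht.ne']
    ring_nf
  rw [h_split, fiberSlope]
  field_simp
  push_cast
  ring

theorem strictAntiOn_fiberSlope (ha : 0 ≤ a) (hc : 0 ≤ c) (hd : 0 < d) (hp : 4 ≤ p) :
    StrictAntiOn (fiberSlope a b c d p) (Ioi 0) := by
  intro s hs u _ hsu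
  have h_a : a / u ^ 2 ≤ a / s ^ 2 :=
    div_le_div_of_nonneg_left ha (pow_pos hs 2) (pow_le_pow_left₀ hs.le hsu.le 2)
  have h_c : c * s ^ (p - 4) ≤ c * u ^ (p - 4) :=
    mul_le_mul_of_nonneg_left (rpow_le_rpow hs.le hsu.le (by linarith)) hc
  have h_d : d * s ^ 2 < d * u ^ 2 :=
    mul_lt_mul_of_pos_left (pow_lt_pow_left₀ hsu hs.le two_ne_zero) hd
  simp only [fiberSlope]
  linarith

theorem eventually_fiberMap_pos (ha : 0 < a) (hp : 2 < p) :
    ∀ᶠ t in 𝓝[>] 0, 0 < fiberMap a b c d p t := by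
  set q : ℝ → ℝ := fun t => a / 2 + b / 4 * t ^ 2 - c / p * t ^ (p - 2) - d / 6 * t ^ 4
  have hq : Tendsto q (𝓝 0) (𝓝 (a / 2)) := by
    have h_rpow : Continuous fun t : ℝ => t ^ (p - 2) :=
      continuous_id.rpow_const fun _ => Or.inr (by linarith)
    have : Continuous q := by fun_prop
    simpa [q, zero_rpow (by linarith : p - 2 ≠ 0)] using this.tendsto 0
  filter_upwards [nhdsWithin_le_nhds (hq.eventually (lt_mem_nhds (half_pos ha))),
    self_mem_nhdsWithin] with t hqt (ht : 0 < t)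
  have h_split : t ^ p = t ^ (p - 2) * t ^ 2 := by
    rw [← rpow_add_natCast ht.ne']
    norm_num
  have : fiberMap a b c d p t = t ^ 2 * q t := by
    rw [fiberMap, h_split]
    ring
  rw [this]
  positivity

theorem eventually_fiberMap_neg (hd : 0 < d) (hp : p < 6) :
    ∀ᶠ t in atTop, fiberMap a b c d p t < 0 := by
  set q : ℝ → ℝ := fun t => a / 2 * t⁻¹ ^ 4 + b / 4 * t⁻¹ ^ 2 - c / p * t ^ (-(6 - p)) - d / 6
  have hq : Tendsto q atTop (𝓝 (-(d / 6))) := by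
    have := (((tendsto_inv_atTop_zero.pow 4).const_mul (a / 2)).add
      ((tendsto_inv_atTop_zero.pow 2).const_mul (b / 4))).sub
      ((tendsto_rpow_neg_atTop (by linarith : 0 < 6 - p)).const_mul (c / p)) |>.sub_const (d / 6)
    simpa [q] using this
  filter_upwards [hq.eventually (gt_mem_nhds (neg_neg_of_pos (by positivity))),
    eventually_gt_atTop 0] with t hqt ht
  have h_split : t ^ p = t ^ (-(6 - p)) * t ^ 6 := by
    rw [← rpow_add_natCast ht.ne']
    norm_num
  have : fiberMap a b c d p t = t ^ 6 * q t := by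
    rw [fiberMap, h_split]
    simp only [q]
    field_simp
  rw [this]
  exact mul_neg_of_pos_of_neg (by positivity) hqt

theorem fiberMap_zero (hp : p ≠ 0) : fiberMap a b c d p 0 = 0 := by
  simp [fiberMap, zero_rpow hp]

theorem deriv_fiberMap_eq_zero_iff (hp : p ≠ 0) {t : ℝ} (ht : 0 < t) :
    deriv (fiberMap a b c d p) t = 0 ↔ fiberSlope a b c d p t = 0 := by
  simp [(hasDerivAt_fiberMap hp ht).deriv, ht.ne']

end

theorem stmt_0_general (a b c d p : ℝ) (ha : 0 < a) (hc : 0 < c) (hd : 0 < d)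
    (hp4 : 4 < p) (hp6 : p < 6)
    (g : ℝ → ℝ)
    (hg : ∀ t : ℝ, g t = a / 2 * t ^ 2 + b / 4 * t ^ 4 - c / p * t ^ p - d / 6 * t ^ 6) :
    ∃ t₀ : ℝ, 0 < t₀ ∧ IsMaxOn g (Set.Ici (0 : ℝ)) t₀ ∧ 0 < g t₀ ∧
      deriv g t₀ = 0 ∧ (∀ t : ℝ, 0 < t → deriv g t = 0 → t = t₀) ∧
      (∃ T : ℝ, 0 < T ∧ ∀ t ≥ T, g t < 0) ∧
      (∃ δ : ℝ, 0 < δ ∧ ∀ t : ℝ, 0 < t → t < δ → 0 < g t) := by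
  obtain rfl : g = fiberMap a b c d p := funext hg
  have hp : p ≠ 0 := by linarith
  have h_small : ∀ᶠ t in 𝓝[>] 0, 0 < fiberMap a b c d p t :=
    eventually_fiberMap_pos ha (by linarith)
  have h_large : ∀ᶠ t in atTop, fiberMap a b c d p t < 0 := eventually_fiberMap_neg hd hp6
  obtain ⟨δ, hδ, h_small⟩ := mem_nhdsGT_iff_exists_Ioo_subset.1 h_small
  obtain ⟨T, h_large⟩ := eventually_atTop.1 h_large
  have h_pos : 0 < fiberMap a b c d p (δ / 2) := h_small ⟨half_pos hδ, half_lt_self hδ⟩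
  obtain ⟨t₀, ht₀, h_max⟩ := (continuous_fiberMap (by linarith)).continuousOn.exists_isMaxOn_Ici
    (half_pos hδ).le (eventually_atTop.2 ⟨T, fun t ht => (h_large t ht).le.trans h_pos.le⟩)
  have h_max_pos : 0 < fiberMap a b c d p t₀ := h_pos.trans_le (h_max (mem_Ici.2 (half_pos hδ).le))
  have ht₀_pos : 0 < t₀ := ht₀.lt_of_ne (by rintro rfl; simp [fiberMap_zero hp] at h_max_pos)
  have h_crit : deriv (fiberMap a b c d p) t₀ = 0 :=
    (h_max.isLocalMax (Ici_mem_nhds ht₀_pos)).deriv_eq_zero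
  refine ⟨t₀, ht₀_pos, h_max, h_max_pos, h_crit, fun t ht h_crit_t => ?_,
    ⟨max T 1, by positivity, fun t ht => h_large t (le_of_max_le_left ht)⟩,
    ⟨δ, hδ, fun t ht htδ => h_small ⟨ht, htδ⟩⟩⟩
  rw [deriv_fiberMap_eq_zero_iff hp ht] at h_crit_t
  rw [deriv_fiberMap_eq_zero_iff hp ht₀_pos] at h_crit
  exact (strictAntiOn_fiberSlope ha.le hc.le hd hp4.le).injOn ht ht₀_pos
    (h_crit_t.trans h_crit.symm)

theorem stmt_0 (a b c d p : ℝ) (ha : 0 < a) (hb : 0 < b) (hc : 0 < c) (hd : 0 < d)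
    (hp4 : 4 < p) (hp6 : p < 6)
    (g : ℝ → ℝ)
    (hg : ∀ t : ℝ, g t = a / 2 * t ^ 2 + b / 4 * t ^ 4 - c / p * t ^ p - d / 6 * t ^ 6) :
    ∃ t₀ : ℝ, 0 < t₀ ∧ IsMaxOn g (Set.Ici (0 : ℝ)) t₀ ∧ 0 < g t₀ ∧
      deriv g t₀ = 0 ∧ (∀ t : ℝ, 0 < t → deriv g t = 0 → t = t₀) ∧
      (∃ T : ℝ, 0 < T ∧ ∀ t ≥ T, g t < 0) ∧
      (∃ δ : ℝ, 0 < δ ∧ ∀ t : ℝ, 0 < t → t < δ → 0 < g t) :=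
  stmt_0_general a b c d p ha hc hd hp4 hp6 g hg
end

section
/- Let V : ℝ³ → ℝ be measurable with V ≥ 0, and suppose the set A = {x : V(x) ≤ M₀} has finite Lebesgue measure for some M₀ > 0. For λ ≥ 1 define ‖u‖_λ² = ∫(|∇u|² + λV u²). Then there exists κ > 0 (independent of λ ≥ 1) such that ‖u‖_λ ≥ κ‖u‖_{H¹} for all u in E = {u ∈ H¹(ℝ³) : ∫V u² < ∞}. -/
open MeasureTheory Real

local notation "E3" => EuclideanSpace ℝ (Fin 3)

/-!
On `{V > M₀}` one has `u² ≤ V u² / M₀`, so only `∫_A u²` over the finite-measure set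
`A = {V ≤ M₀}` has to be controlled by the gradient. Instead of Sobolev's inequality we use an
averaging argument: for a ball `B = B(0, r)`, `|u x|² ≤ 2 |u (x + h) - u x|² + 2 |u (x + h)|²`;
averaging over `h ∈ B`, integrating over `x ∈ A` and using
`∫ |u (x + h) - u x|² dx ≤ |h|² ∫ |∇u|²` (fundamental theorem of calculus along segments) gives
`|B| ∫_A u² ≤ 2 |B| r² ∫ |∇u|² + 2 |A| ∫ u²`. Choosing `|B| > 4 |A|`, the last term is at most half
of `|B| ∫ u²` and can be absorbed, whence `∫ u² ≤ 4 r² ∫ |∇u|² + (2 / M₀) ∫ V u²`.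
-/

open Metric Set
open scoped ENNReal NNReal

section
variable {α : Type*} [MeasurableSpace α]

theorem sq_lintegral_le_measure_univ_mul (μ : Measure α) {f : α → ℝ≥0∞} (hf : AEMeasurable f μ) :
    (∫⁻ a, f a ∂μ) ^ 2 ≤ μ univ * ∫⁻ a, f a ^ 2 ∂μ := by
  have hCS := ENNReal.lintegral_mul_le_Lp_mul_Lq μ (p := 2) (q := 2)
    (by norm_num [Real.holderConjugate_iff]) hf aemeasurable_const (g := fun _ => 1)
  simp only [Pi.mul_apply, mul_one, lintegral_const, ENNReal.rpow_two, one_pow, one_mul] at hCS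
  calc (∫⁻ a, f a ∂μ) ^ 2
      ≤ ((∫⁻ a, f a ^ 2 ∂μ) ^ (1 / 2 : ℝ) * μ univ ^ (1 / 2 : ℝ)) ^ 2 := by gcongr
    _ = μ univ * ∫⁻ a, f a ^ 2 ∂μ := by
      rw [mul_pow, ← ENNReal.rpow_two, ← ENNReal.rpow_two, ← ENNReal.rpow_mul, ← ENNReal.rpow_mul]
      norm_num [mul_comm]

theorem setLIntegral_lt_le_inv_mul_lintegral {V : α → ℝ} (hV : Measurable V) (μ : Measure α) {M : ℝ}
    (hM : 0 < M) (f : α → ℝ≥0∞) :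
    ∫⁻ x in {x | M < V x}, f x ∂μ ≤ (ENNReal.ofReal M)⁻¹ * ∫⁻ x, ENNReal.ofReal (V x) * f x ∂μ := by
  have hM' : ENNReal.ofReal M ≠ 0 := ENNReal.ofReal_pos.2 hM |>.ne'
  calc ∫⁻ x in {x | M < V x}, f x ∂μ
      ≤ ∫⁻ x in {x | M < V x}, (ENNReal.ofReal M)⁻¹ * (ENNReal.ofReal (V x) * f x) ∂μ := by
        refine setLIntegral_mono' (measurableSet_lt measurable_const hV) fun x hx => ?_
        calc f x = (ENNReal.ofReal M)⁻¹ * (ENNReal.ofReal M * f x) := by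
              rw [← mul_assoc, ENNReal.inv_mul_cancel hM' ENNReal.ofReal_ne_top, one_mul]
          _ ≤ _ := by gcongr; exact le_of_lt hx
    _ ≤ ∫⁻ x, (ENNReal.ofReal M)⁻¹ * (ENNReal.ofReal (V x) * f x) ∂μ :=
        setLIntegral_le_lintegral _ _
    _ = (ENNReal.ofReal M)⁻¹ * ∫⁻ x, ENNReal.ofReal (V x) * f x ∂μ :=
        lintegral_const_mul' _ _ (ENNReal.inv_ne_top.2 hM')
end

theorem enorm_sq_le_two_mul {F : Type*} [SeminormedAddGroup F] (a b : F) :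
    ‖a‖ₑ ^ 2 ≤ 2 * (‖b - a‖ₑ ^ 2 + ‖b‖ₑ ^ 2) := by
  have h : ‖a‖₊ ^ 2 ≤ 2 * (‖b - a‖₊ ^ 2 + ‖b‖₊ ^ 2) := by
    refine (pow_le_pow_left₀ (by positivity) ?_ 2).trans add_sq_le
    exact (nnnorm_le_nnnorm_add_nnnorm_sub b a).trans_eq (add_comm _ _)
  simpa [enorm] using (ENNReal.coe_le_coe.2 h)

theorem measure_mul_enorm_sq_le_lintegral_translate {E F : Type*} [NormedAddCommGroup E]
    [MeasurableSpace E] [BorelSpace E] [NormedAddCommGroup F] (μ : Measure E)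
    [μ.IsAddLeftInvariant] {u : E → F}
    (hu : Continuous u) (B : Set E) (x : E) :
    μ B * ‖u x‖ₑ ^ 2 ≤
      2 * ∫⁻ h in B, ‖u (x + h) - u x‖ₑ ^ 2 ∂μ + 2 * ∫⁻ y, ‖u y‖ₑ ^ 2 ∂μ := by
  have hmeas : Measurable fun h => 2 * ‖u (x + h) - u x‖ₑ ^ 2 :=
    (by fun_prop : Continuous fun h => ‖u (x + h) - u x‖ₑ ^ 2).measurable.const_mul 2
  calc μ B * ‖u x‖ₑ ^ 2 = ∫⁻ h in B, ‖u x‖ₑ ^ 2 ∂μ := by rw [setLIntegral_const, mul_comm]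
    _ ≤ ∫⁻ h in B, (2 * ‖u (x + h) - u x‖ₑ ^ 2 + 2 * ‖u (x + h)‖ₑ ^ 2) ∂μ :=
        lintegral_mono fun h => (mul_add (2 : ℝ≥0∞) _ _).symm ▸ enorm_sq_le_two_mul _ _
    _ = 2 * ∫⁻ h in B, ‖u (x + h) - u x‖ₑ ^ 2 ∂μ + 2 * ∫⁻ h in B, ‖u (x + h)‖ₑ ^ 2 ∂μ := by
        rw [lintegral_add_left hmeas, lintegral_const_mul' _ _ (by simp),
          lintegral_const_mul' _ _ (by simp)]
    _ ≤ 2 * ∫⁻ h in B, ‖u (x + h) - u x‖ₑ ^ 2 ∂μ + 2 * ∫⁻ y, ‖u y‖ₑ ^ 2 ∂μ := by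
        gcongr _ + 2 * ?_
        exact (setLIntegral_le_lintegral _ _).trans_eq
          (lintegral_add_left_eq_self (fun y => ‖u y‖ₑ ^ 2) x)

section
variable {F : Type*} [NormedAddCommGroup F] [NormedSpace ℝ F] [CompleteSpace F]

theorem enorm_sub_le_lintegral_enorm_deriv {f : ℝ → F} {a b : ℝ} (hab : a ≤ b)
    (hf : ∀ t ∈ Icc a b, DifferentiableAt ℝ f t) :
    ‖f b - f a‖ₑ ≤ ∫⁻ t in Icc a b, ‖deriv f t‖ₑ := by
  by_cases hfin : ∫⁻ t in Icc a b, ‖deriv f t‖ₑ = ∞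
  · simp [hfin]
  have hint : IntegrableOn (deriv f) (Icc a b) :=
    ⟨(stronglyMeasurable_deriv f).aestronglyMeasurable, lt_top_iff_ne_top.2 hfin⟩
  rw [← intervalIntegral.integral_eq_sub_of_hasDerivAt
      (fun t ht => (hf t (uIcc_of_le hab ▸ ht)).hasDerivAt)
      ((intervalIntegrable_iff_integrableOn_Icc_of_le hab).2 hint),
    intervalIntegral.integral_of_le hab, ← integral_Icc_eq_integral_Ioc]
  exact enorm_integral_le_lintegral_enorm _

variable {E : Type*} [NormedAddCommGroup E] [NormedSpace ℝ E] [MeasurableSpace E] [BorelSpace E]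

theorem enorm_sub_sq_le_lintegral_segment {u : E → F} (hu : Differentiable ℝ u) (x h : E) :
    ‖u (x + h) - u x‖ₑ ^ 2 ≤
      ‖h‖ₑ ^ 2 * ∫⁻ t in Icc (0 : ℝ) 1, ‖fderiv ℝ u (x + t • h)‖ₑ ^ 2 := by
  have hγ : ∀ t : ℝ, HasDerivAt (fun s : ℝ => u (x + s • h)) (fderiv ℝ u (x + t • h) h) t := by
    intro t
    refine (hu _).hasFDerivAt.comp_hasDerivAt t ?_
    simpa using ((hasDerivAt_id t).smul_const h).const_add x
  have hsegment : ‖u (x + h) - u x‖ₑ ≤ ‖h‖ₑ * ∫⁻ t in Icc (0 : ℝ) 1, ‖fderiv ℝ u (x + t • h)‖ₑ := by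
    calc ‖u (x + h) - u x‖ₑ
        ≤ ∫⁻ t in Icc (0 : ℝ) 1, ‖deriv (fun s : ℝ => u (x + s • h)) t‖ₑ := by
          simpa using enorm_sub_le_lintegral_enorm_deriv zero_le_one
            fun t _ => (hγ t).differentiableAt
      _ ≤ ∫⁻ t in Icc (0 : ℝ) 1, ‖h‖ₑ * ‖fderiv ℝ u (x + t • h)‖ₑ := by
          refine lintegral_mono fun t => ?_
          rw [(hγ t).deriv, mul_comm]
          exact ContinuousLinearMap.le_opENorm _ _
      _ = ‖h‖ₑ * ∫⁻ t in Icc (0 : ℝ) 1, ‖fderiv ℝ u (x + t • h)‖ₑ :=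
          lintegral_const_mul' _ _ enorm_ne_top
  have hmeas : Measurable fun t : ℝ => ‖fderiv ℝ u (x + t • h)‖ₑ :=
    (measurable_fderiv ℝ u).enorm.comp (by fun_prop : Continuous fun t : ℝ => x + t • h).measurable
  calc ‖u (x + h) - u x‖ₑ ^ 2
      ≤ ‖h‖ₑ ^ 2 * (∫⁻ t in Icc (0 : ℝ) 1, ‖fderiv ℝ u (x + t • h)‖ₑ) ^ 2 := by
        rw [← mul_pow]; gcongr
    _ ≤ ‖h‖ₑ ^ 2 * ∫⁻ t in Icc (0 : ℝ) 1, ‖fderiv ℝ u (x + t • h)‖ₑ ^ 2 := by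
        gcongr
        simpa using sq_lintegral_le_measure_univ_mul (volume.restrict (Icc (0 : ℝ) 1))
          hmeas.aemeasurable

theorem lintegral_enorm_sub_translate_sq_le (μ : Measure E) [μ.IsAddRightInvariant] [SFinite μ]
    {u : E → F} (hu : Differentiable ℝ u) (h : E) :
    ∫⁻ x, ‖u (x + h) - u x‖ₑ ^ 2 ∂μ ≤ ‖h‖ₑ ^ 2 * ∫⁻ x, ‖fderiv ℝ u x‖ₑ ^ 2 ∂μ := by
  have hmeas : Measurable fun p : E × ℝ => ‖fderiv ℝ u (p.1 + p.2 • h)‖ₑ ^ 2 :=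
    ((measurable_fderiv ℝ u).enorm.pow_const 2).comp
      (by fun_prop : Continuous fun p : E × ℝ => p.1 + p.2 • h).measurable
  calc ∫⁻ x, ‖u (x + h) - u x‖ₑ ^ 2 ∂μ
      ≤ ∫⁻ x, ‖h‖ₑ ^ 2 * (∫⁻ t in Icc (0 : ℝ) 1, ‖fderiv ℝ u (x + t • h)‖ₑ ^ 2) ∂μ :=
        lintegral_mono fun x => enorm_sub_sq_le_lintegral_segment hu x h
    _ = ‖h‖ₑ ^ 2 * ∫⁻ t in Icc (0 : ℝ) 1, ∫⁻ x, ‖fderiv ℝ u (x + t • h)‖ₑ ^ 2 ∂μ := by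
        rw [lintegral_const_mul' _ _ (by simp), lintegral_lintegral_swap hmeas.aemeasurable]
    _ = ‖h‖ₑ ^ 2 * ∫⁻ x, ‖fderiv ℝ u x‖ₑ ^ 2 ∂μ := by
        simp [lintegral_add_right_eq_self (fun y => ‖fderiv ℝ u y‖ₑ ^ 2)]

variable [FiniteDimensional ℝ E] (μ : Measure E) [μ.IsAddHaarMeasure]

theorem measure_ball_mul_setLIntegral_enorm_sq_le {u : E → F} (hu : Differentiable ℝ u)
    (A : Set E) (r : ℝ≥0) :
    μ (ball 0 r) * ∫⁻ x in A, ‖u x‖ₑ ^ 2 ∂μ ≤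
      2 * μ (ball 0 r) * (r : ℝ≥0∞) ^ 2 * ∫⁻ x, ‖fderiv ℝ u x‖ₑ ^ 2 ∂μ +
        2 * μ A * ∫⁻ x, ‖u x‖ₑ ^ 2 ∂μ := by
  set B := ball (0 : E) r
  set G := ∫⁻ x, ‖fderiv ℝ u x‖ₑ ^ 2 ∂μ
  set U := ∫⁻ x, ‖u x‖ₑ ^ 2 ∂μ
  have hmeas : Measurable fun p : E × E => ‖u (p.1 + p.2) - u p.1‖ₑ ^ 2 := by
    have hcont := hu.continuous
    exact (by fun_prop : Continuous fun p : E × E => ‖u (p.1 + p.2) - u p.1‖ₑ ^ 2).measurable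
  have hdiff : ∫⁻ x, ∫⁻ h in B, ‖u (x + h) - u x‖ₑ ^ 2 ∂μ ∂μ ≤
      μ B * (r : ℝ≥0∞) ^ 2 * G := by
    rw [lintegral_lintegral_swap hmeas.aemeasurable]
    calc ∫⁻ h in B, ∫⁻ x, ‖u (x + h) - u x‖ₑ ^ 2 ∂μ ∂μ
        ≤ ∫⁻ h in B, (r : ℝ≥0∞) ^ 2 * G ∂μ := by
          refine setLIntegral_mono' measurableSet_ball fun h hh => ?_
          refine (lintegral_enorm_sub_translate_sq_le μ hu h).trans ?_
          gcongr
          exact ENNReal.coe_le_coe.2 (mem_ball_zero_iff.1 hh).le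
      _ = μ B * (r : ℝ≥0∞) ^ 2 * G := by rw [setLIntegral_const]; ring
  calc μ B * ∫⁻ x in A, ‖u x‖ₑ ^ 2 ∂μ
      ≤ ∫⁻ x in A, μ B * ‖u x‖ₑ ^ 2 ∂μ := lintegral_const_mul_le _ _
    _ ≤ ∫⁻ x in A, (2 * ∫⁻ h in B, ‖u (x + h) - u x‖ₑ ^ 2 ∂μ + 2 * U) ∂μ :=
        lintegral_mono fun x => measure_mul_enorm_sq_le_lintegral_translate μ hu.continuous B x
    _ = ∫⁻ x in A, 2 * ∫⁻ h in B, ‖u (x + h) - u x‖ₑ ^ 2 ∂μ ∂μ + 2 * U * μ A := by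
        rw [lintegral_add_right _ measurable_const, setLIntegral_const]
    _ ≤ 2 * ∫⁻ x, ∫⁻ h in B, ‖u (x + h) - u x‖ₑ ^ 2 ∂μ ∂μ + 2 * U * μ A := by
        gcongr
        exact (setLIntegral_le_lintegral _ _).trans_eq (lintegral_const_mul' _ _ (by simp))
    _ ≤ 2 * (μ B * (r : ℝ≥0∞) ^ 2 * G) + 2 * U * μ A := by gcongr
    _ = _ := by ring

theorem exists_lt_measure_ball [Nontrivial E] {c : ℝ≥0∞} (hc : c ≠ ∞) :
    ∃ r : ℝ≥0, c < μ (ball 0 r) := by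
  have hlim := tendsto_measure_iUnion_atTop (μ := μ)
    (fun m n (hmn : m ≤ n) => ball_subset_ball (x := (0 : E)) (Nat.cast_le.2 hmn))
  rw [iUnion_ball_nat, measure_univ_of_isAddLeftInvariant] at hlim
  obtain ⟨n, hn⟩ := (hlim.eventually (lt_mem_nhds hc.lt_top)).exists
  exact ⟨n, by simpa using hn⟩

theorem lintegral_enorm_sq_le_of_lt_measure_ball {V : E → ℝ} (hV : Measurable V) {M : ℝ}
    (hM : 0 < M) {r : ℝ≥0} (hr : 4 * μ {x | V x ≤ M} < μ (ball 0 r)) {u : E → F}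
    (hu : Differentiable ℝ u) (hU : ∫⁻ x, ‖u x‖ₑ ^ 2 ∂μ ≠ ∞) :
    ∫⁻ x, ‖u x‖ₑ ^ 2 ∂μ ≤ 4 * (r : ℝ≥0∞) ^ 2 * ∫⁻ x, ‖fderiv ℝ u x‖ₑ ^ 2 ∂μ +
      2 * (ENNReal.ofReal M)⁻¹ * ∫⁻ x, ENNReal.ofReal (V x) * ‖u x‖ₑ ^ 2 ∂μ := by
  set A := {x | V x ≤ M}
  set β := μ (ball (0 : E) r)
  set U := ∫⁻ x, ‖u x‖ₑ ^ 2 ∂μ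
  set G := ∫⁻ x, ‖fderiv ℝ u x‖ₑ ^ 2 ∂μ
  set W := ∫⁻ x, ENNReal.ofReal (V x) * ‖u x‖ₑ ^ 2 ∂μ
  have hβ0 : β ≠ 0 := ne_bot_of_gt hr
  have hβ : β ≠ ∞ := measure_ball_lt_top.ne
  have hA : MeasurableSet A := hV measurableSet_Iic
  have hAc : Aᶜ = {x | M < V x} := by ext; simp [A]
  have hsplit : β * U ≤ 2 * β * (r : ℝ≥0∞) ^ 2 * G + 2 * μ A * U +
      β * ((ENNReal.ofReal M)⁻¹ * W) :=
    calc β * U = β * ∫⁻ x in A, ‖u x‖ₑ ^ 2 ∂μ + β * ∫⁻ x in {x | M < V x}, ‖u x‖ₑ ^ 2 ∂μ := by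
          rw [← hAc, ← mul_add, lintegral_add_compl _ hA]
      _ ≤ _ := by
          gcongr
          · exact measure_ball_mul_setLIntegral_enorm_sq_le μ hu A r
          · exact setLIntegral_lt_le_inv_mul_lintegral hV μ hM _
  have hdouble : β * U + β * U ≤
      β * (4 * (r : ℝ≥0∞) ^ 2 * G + 2 * (ENNReal.ofReal M)⁻¹ * W) + β * U :=
    calc β * U + β * U = 2 * (β * U) := (two_mul _).symm
      _ ≤ 2 * (2 * β * (r : ℝ≥0∞) ^ 2 * G + 2 * μ A * U + β * ((ENNReal.ofReal M)⁻¹ * W)) := by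
        gcongr
      _ = β * (4 * (r : ℝ≥0∞) ^ 2 * G + 2 * (ENNReal.ofReal M)⁻¹ * W) + 4 * μ A * U := by ring
      _ ≤ β * (4 * (r : ℝ≥0∞) ^ 2 * G + 2 * (ENNReal.ofReal M)⁻¹ * W) + β * U := by gcongr
  exact (ENNReal.mul_le_mul_iff_right hβ0 hβ).1
    (ENNReal.le_of_add_le_add_right (ENNReal.mul_ne_top hβ hU) hdouble)

end

theorem integral_sq_le_of_lt_measure_ball {E : Type*} [NormedAddCommGroup E]
    [InnerProductSpace ℝ E] [FiniteDimensional ℝ E] [MeasurableSpace E] [BorelSpace E]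
    (μ : Measure E) [μ.IsAddHaarMeasure] {V : E → ℝ} (hV : Measurable V) (hV0 : ∀ x, 0 ≤ V x)
    {M : ℝ} (hM : 0 < M) {r : ℝ≥0} (hr : 4 * μ {x | V x ≤ M} < μ (ball 0 r)) {u : E → ℝ}
    (hu : Differentiable ℝ u) (hu2 : MemLp u 2 μ) (hgrad : MemLp (fun x => ‖gradient u x‖) 2 μ)
    (hVu : Integrable (fun x => V x * u x ^ 2) μ) :
    ∫ x, u x ^ 2 ∂μ ≤
      4 * r ^ 2 * ∫ x, ‖gradient u x‖ ^ 2 ∂μ + 2 * M⁻¹ * ∫ x, V x * u x ^ 2 ∂μ := by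
  have hsq : ∀ a : ℝ, ‖a‖ₑ ^ 2 = ENNReal.ofReal (a ^ 2) := fun a => by
    rw [← ofReal_norm, ← ENNReal.ofReal_pow (norm_nonneg a), Real.norm_eq_abs, sq_abs]
  have hU : ∫⁻ x, ‖u x‖ₑ ^ 2 ∂μ = ENNReal.ofReal (∫ x, u x ^ 2 ∂μ) := by
    rw [ofReal_integral_eq_lintegral_ofReal hu2.integrable_sq (ae_of_all _ fun x => sq_nonneg _)]
    simp_rw [hsq]
  have hG : ∫⁻ x, ‖fderiv ℝ u x‖ₑ ^ 2 ∂μ = ENNReal.ofReal (∫ x, ‖gradient u x‖ ^ 2 ∂μ) := by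
    rw [ofReal_integral_eq_lintegral_ofReal hgrad.integrable_sq (ae_of_all _ fun x => sq_nonneg _)]
    simp_rw [← hsq, enorm_norm, gradient, LinearIsometryEquiv.enorm_map]
  have hW : ∫⁻ x, ENNReal.ofReal (V x) * ‖u x‖ₑ ^ 2 ∂μ =
      ENNReal.ofReal (∫ x, V x * u x ^ 2 ∂μ) := by
    rw [ofReal_integral_eq_lintegral_ofReal hVu
      (ae_of_all _ fun x => mul_nonneg (hV0 x) (sq_nonneg _))]
    simp_rw [hsq, ENNReal.ofReal_mul (hV0 _)]
  have key := lintegral_enorm_sq_le_of_lt_measure_ball μ hV hM hr hu (hU ▸ ENNReal.ofReal_ne_top)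
  rw [hU, hG, hW] at key
  have hG0 : 0 ≤ ∫ x, ‖gradient u x‖ ^ 2 ∂μ := integral_nonneg fun x => sq_nonneg _
  have hW0 : 0 ≤ ∫ x, V x * u x ^ 2 ∂μ := integral_nonneg fun x => mul_nonneg (hV0 x) (sq_nonneg _)
  refine (ENNReal.ofReal_le_ofReal_iff (by positivity)).1 (key.trans_eq ?_)
  rw [ENNReal.ofReal_add (by positivity) (by positivity), ENNReal.ofReal_mul (by positivity),
    ENNReal.ofReal_mul (by positivity), ENNReal.ofReal_mul (by positivity),
    ENNReal.ofReal_mul (by positivity), ENNReal.ofReal_inv_of_pos hM]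
  simp

theorem stmt_11 (V : E3 → ℝ) (hVmeas : Measurable V) (hV0 : ∀ x, 0 ≤ V x)
    (M₀ : ℝ) (hM₀ : 0 < M₀) (hA : volume {x : E3 | V x ≤ M₀} < ⊤) :
    ∃ κ : ℝ, 0 < κ ∧ ∀ lam : ℝ, 1 ≤ lam → ∀ u : E3 → ℝ,
      Differentiable ℝ u →
      MemLp u 2 volume →
      MemLp (fun x => ‖gradient u x‖) 2 volume →
      Integrable (fun x => V x * (u x) ^ 2) volume →
      κ * Real.sqrt (∫ x, (‖gradient u x‖ ^ 2 + (u x) ^ 2)) ≤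
        Real.sqrt (∫ x, (‖gradient u x‖ ^ 2 + lam * V x * (u x) ^ 2)) := by
  obtain ⟨r, hr⟩ := exists_lt_measure_ball (volume : Measure E3)
    (c := 4 * volume {x : E3 | V x ≤ M₀}) (by finiteness)
  have hK : 0 < 1 + 4 * (r : ℝ) ^ 2 + 2 * M₀⁻¹ := by positivity
  refine ⟨(√(1 + 4 * r ^ 2 + 2 * M₀⁻¹))⁻¹, by positivity, fun lam hlam u hu hu2 hgrad hVu => ?_⟩
  have hPoincare := integral_sq_le_of_lt_measure_ball volume hVmeas hV0 hM₀ hr hu hu2 hgrad hVu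
  have hIg : 0 ≤ ∫ x, ‖gradient u x‖ ^ 2 := integral_nonneg fun x => sq_nonneg _
  have hIV : 0 ≤ ∫ x, V x * u x ^ 2 := integral_nonneg fun x => mul_nonneg (hV0 x) (sq_nonneg _)
  have hlamIV := le_mul_of_one_le_left hIV hlam
  simp_rw [mul_assoc lam]
  rw [integral_add hgrad.integrable_sq hu2.integrable_sq,
    integral_add hgrad.integrable_sq (hVu.const_mul lam), integral_const_mul,
    inv_mul_le_iff₀ (by positivity), ← Real.sqrt_mul hK.le]
  refine Real.sqrt_le_sqrt ?_
  have hM₀inv : 0 ≤ M₀⁻¹ := inv_nonneg.2 hM₀.le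
  nlinarith [mul_nonneg hM₀inv hIg, mul_le_mul_of_nonneg_left hlamIV hM₀inv,
    mul_nonneg (sq_nonneg (r : ℝ)) (hIV.trans hlamIV)]
end

section
/- Let H be a Hilbert space and I ∈ C¹(H, ℝ) be of the form I(u) = ½‖u‖² + ¼F(u) - (μ/p)P(u) - (1/6)Q(u) with F, P, Q ≥ 0, t-homogeneous of degrees 4, p, 6 respectively (4 < p < 6), and P, Q not identically zero near any ray. Define N = {u ≠ 0 : ⟨I'(u), u⟩ = 0}, c = inf_N I, c* = inf_{u≠0} max_{t≥0} I(tu), and c** = inf_{γ ∈ Γ} sup_{t∈[0,1]} I(γ(t)) where Γ = {γ ∈ C([0,1], H) : γ(0) = 0, I(γ(1)) < 0}. Assume additionally: (i) for each u ≠ 0 there is a unique t(u) > 0 with t(u)u ∈ N and I(t(u)u) = max_{t≥0} I(tu); (ii) for u with ‖u‖ small, ‖u‖² + F(u) > μP(u) + Q(u). Then c = c* = c**. -/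
/-!
Along a ray, `I (t • u)` is the fibering map `t²a/2 + t⁴b/4 - tᵖc/p - t⁶d/6` with `a = ‖u‖²`,
`b = F u`, `c = μ P u`, `d = Q u`, and `⟨I'(u), u⟩ = a + b - c - d` is its derivative at `t = 1`.
At a Nehari point `a + b = c + d`, and Bernoulli's inequality shows that the fibering map then
peaks at `t = 1`: Nehari values are exactly the ray maxima, so `c = c*`, and since rays through
Nehari points eventually become negative they give admissible paths whose maximum is a Nehari value,
so `c** ≤ c`. Conversely `I ≥ ⟨I'(u), u⟩ / 4`, so `⟨I'(u), u⟩ < 0` at the end of an admissible path,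
while `⟨I'(u), u⟩ > 0` on a punctured ball around `0`; by connectedness every admissible path meets
the Nehari set, so `c ≤ c**`.
-/

open Set Filter Topology

noncomputable def fiberingMap (p a b c d t : ℝ) : ℝ :=
  t ^ 2 * a / 2 + t ^ 4 * b / 4 - t ^ p * c / p - t ^ 6 * d / 6

theorem hasDerivAt_fiberingMap_one {p : ℝ} (hp : p ≠ 0) (a b c d : ℝ) :
    HasDerivAt (fiberingMap p a b c d) (a + b - c - d) 1 := by
  have h := (((((hasDerivAt_pow 2 (1 : ℝ)).mul_const a).div_const 2).add
    (((hasDerivAt_pow 4 (1 : ℝ)).mul_const b).div_const 4)).sub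
    ((((Real.hasDerivAt_rpow_const (p := p) (Or.inl one_ne_zero)).mul_const c).div_const p))).sub
    (((hasDerivAt_pow 6 (1 : ℝ)).mul_const d).div_const 6)
  exact h.congr_deriv (by rw [Real.one_rpow]; field_simp; ring)

theorem div_four_le_fiberingMap_one {p : ℝ} (hp : 4 ≤ p) {a c d : ℝ} (ha : 0 ≤ a) (hc : 0 ≤ c)
    (hd : 0 ≤ d) (b : ℝ) : (a + b - c - d) / 4 ≤ fiberingMap p a b c d 1 := by
  have : c / p ≤ c / 4 := div_le_div_of_nonneg_left hc (by norm_num) hp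
  simp only [fiberingMap, one_pow, Real.one_rpow, one_mul]
  linarith

/-- Bernoulli's inequality for `(t ^ 4) ^ (q / 4)`. -/
theorem pow_four_div_four_sub_rpow_div_le {q : ℝ} (hq : 4 ≤ q) {t : ℝ} (ht : 0 ≤ t) :
    t ^ 4 / 4 - t ^ q / q ≤ 1 / 4 - 1 / q := by
  have h := one_add_mul_self_le_rpow_one_add (s := t ^ 4 - 1) (by linarith [pow_nonneg ht 4])
    (p := q / 4) (by linarith)
  have hpow : (t ^ 4) ^ (q / 4) = t ^ q := by
    rw [← Real.rpow_natCast, ← Real.rpow_mul ht]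
    ring_nf
  rw [add_sub_cancel, hpow] at h
  have hq0 : 0 < q := by linarith
  field_simp
  nlinarith

theorem fiberingMap_le_fiberingMap_one {p : ℝ} (hp : 4 ≤ p) {a b c d : ℝ} (ha : 0 ≤ a) (hc : 0 ≤ c)
    (hd : 0 ≤ d) (habcd : a + b = c + d) {t : ℝ} (ht : 0 ≤ t) :
    fiberingMap p a b c d t ≤ fiberingMap p a b c d 1 := by
  have hpow := pow_four_div_four_sub_rpow_div_le hp ht
  have hsix := pow_four_div_four_sub_rpow_div_le (q := 6) (by norm_num) ht
  norm_cast at hsix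
  simp only [fiberingMap, one_pow, Real.one_rpow, one_mul]
  -- with `b = c + d - a`, the difference splits into an `a`-, a `c`- and a `d`-part, each `≤ 0`
  linear_combination c * hpow + d * hsix + (t ^ 4 - 1) / 4 * habcd + a / 4 * sq_nonneg (t ^ 2 - 1)

theorem tendsto_rpow_mul_add_sq_mul_atTop {p c d : ℝ} (hp : 4 < p) (hc : 0 ≤ c) (hd : 0 ≤ d)
    (hcd : 0 < c ∨ 0 < d) :
    Tendsto (fun t : ℝ => t ^ (p - 4) * c / p + t ^ 2 * d / 6) atTop atTop := by
  have hp0 : 0 < p := by linarith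
  rcases hcd with hc' | hd'
  · refine tendsto_atTop_mono (fun t => le_add_of_nonneg_right (by positivity)) ?_
    exact ((tendsto_rpow_atTop (by linarith)).atTop_mul_const hc').atTop_div_const hp0
  · refine tendsto_atTop_mono' _ ((eventually_ge_atTop 0).mono fun t ht =>
      le_add_of_nonneg_left (by positivity)) ?_
    exact ((tendsto_pow_atTop two_ne_zero).atTop_mul_const hd').atTop_div_const (by norm_num)

theorem exists_fiberingMap_neg {p : ℝ} (hp : 4 < p) {a c d : ℝ} (ha : 0 ≤ a) (hc : 0 ≤ c)
    (hd : 0 ≤ d) (hcd : 0 < c ∨ 0 < d) (b : ℝ) : ∃ t, 0 ≤ t ∧ fiberingMap p a b c d t < 0 := by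
  obtain ⟨t, hbig, ht⟩ := (((tendsto_rpow_mul_add_sq_mul_atTop hp hc hd hcd).eventually_gt_atTop
    (a / 2 + b / 4)).and (eventually_ge_atTop 1)).exists
  have ht0 : 0 < t := by linarith
  have hsplit : t ^ p = t ^ 4 * t ^ (p - 4) := by
    rw [← Real.rpow_natCast, ← Real.rpow_add ht0]
    norm_num
  have hsq : t ^ 2 * a ≤ t ^ 4 * a :=
    mul_le_mul_of_nonneg_right (pow_le_pow_right₀ ht (by norm_num)) ha
  refine ⟨t, ht0.le, ?_⟩
  calc fiberingMap p a b c d t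
      ≤ t ^ 4 * (a / 2 + b / 4 - (t ^ (p - 4) * c / p + t ^ 2 * d / 6)) := by
        rw [fiberingMap, hsplit]
        linear_combination hsq / 2
    _ < 0 := mul_neg_of_pos_of_neg (by positivity) (by linarith)

theorem DifferentiableAt.fderiv_apply_self_eq {E F : Type*} [NormedAddCommGroup E]
    [NormedSpace ℝ E] [NormedAddCommGroup F] [NormedSpace ℝ F] {f : E → F} {u : E}
    (hf : DifferentiableAt ℝ f u) {g : ℝ → F} {g' : F} (hg : HasDerivAt g g' 1)
    (hfg : (fun t : ℝ => f (t • u)) =ᶠ[𝓝 1] g) :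
    fderiv ℝ f u u = g' := by
  have hray : HasDerivAt (fun t : ℝ => f (t • u)) (fderiv ℝ f u u) 1 := by
    have hsmul : HasDerivAt (fun t : ℝ => t • u) u 1 := by
      simpa using (hasDerivAt_id (1 : ℝ)).smul_const u
    exact hf.hasFDerivAt.comp_hasDerivAt_of_eq 1 hsmul (one_smul ℝ u).symm
  exact hray.unique (hg.congr_of_eventuallyEq hfg)

theorem IsPreconnected.exists_ne_and_eq_zero {X : Type*} [TopologicalSpace X] {S : Set X}
    (hS : IsPreconnected S) {E : X → ℝ} (hE : Continuous E) {x₀ y : X} (hx₀ : x₀ ∈ S)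
    (hy : y ∈ S) (hEx₀ : 0 ≤ E x₀) (hEy : E y < 0) (hpos : ∀ᶠ x in 𝓝[≠] x₀, 0 < E x) :
    ∃ x ∈ S, x ≠ x₀ ∧ E x = 0 := by
  by_contra! hS0
  have hopen_neg : IsOpen {x | E x < 0} := isOpen_lt hE continuous_const
  have hopen_pos : IsOpen {x | x ≠ x₀ → 0 < E x} := by
    refine isOpen_iff_mem_nhds.2 fun x hx => ?_
    rcases eq_or_ne x x₀ with rfl | hne
    · exact eventually_nhdsWithin_iff.1 hpos
    · exact (continuousAt_const.eventually_lt hE.continuousAt (hx hne)).mono fun z hz _ => hz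
  have hcover : S ⊆ {x | E x < 0} ∪ {x | x ≠ x₀ → 0 < E x} := fun x hx =>
    (lt_or_ge (E x) 0).imp id fun h hne => h.lt_of_ne (hS0 x hx hne).symm
  obtain ⟨z, -, hz, hz'⟩ :=
    hS _ _ hopen_neg hopen_pos hcover ⟨y, hy, hEy⟩ ⟨x₀, hx₀, fun h => (h rfl).elim⟩
  rcases eq_or_ne z x₀ with rfl | hne
  · exact (hz.trans_le hEx₀).false
  · exact (hz.trans (hz' hne)).false

theorem exists_mem_Icc_ne_and_eq_zero_of_path {X : Type*} [TopologicalSpace X] {E : X → ℝ}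
    (hE : Continuous E) {x₀ : X} (hEx₀ : 0 ≤ E x₀) (hpos : ∀ᶠ x in 𝓝[≠] x₀, 0 < E x)
    {γ : ℝ → X} (hγ : ContinuousOn γ (Icc 0 1)) (hγ0 : γ 0 = x₀) (hγ1 : E (γ 1) < 0) :
    ∃ t ∈ Icc (0 : ℝ) 1, γ t ≠ x₀ ∧ E (γ t) = 0 := by
  obtain ⟨_, ⟨t, ht, rfl⟩, hγt, hEt⟩ := (isPreconnected_Icc.image γ hγ).exists_ne_and_eq_zero hE
    (hγ0 ▸ mem_image_of_mem γ (left_mem_Icc.2 zero_le_one))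
    (mem_image_of_mem γ (right_mem_Icc.2 zero_le_one)) hEx₀ hγ1 hpos
  exact ⟨t, ht, hγt, hEt⟩

theorem sSup_ray_eq {V : Type*} [AddCommGroup V] [Module ℝ V] {I : V → ℝ} {u : V} {t : ℝ}
    (ht : 0 ≤ t) (hmax : ∀ s : ℝ, 0 ≤ s → I (s • u) ≤ I (t • u)) :
    sSup ((fun s : ℝ => I (s • u)) '' Ici 0) = I (t • u) :=
  IsGreatest.csSup_eq ⟨⟨t, ht, rfl⟩, forall_mem_image.2 hmax⟩

theorem sInf_image_eq_sInf_sSup_ray {V : Type*} [AddCommGroup V] [Module ℝ V] {I : V → ℝ}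
    {N : Set V} (hN : ∀ v ∈ N, v ≠ 0) (hmax : ∀ v ∈ N, ∀ s : ℝ, 0 ≤ s → I (s • v) ≤ I v)
    (hproj : ∀ u : V, u ≠ 0 → ∃ t : ℝ, 0 < t ∧ t • u ∈ N ∧
      ∀ s : ℝ, 0 ≤ s → I (s • u) ≤ I (t • u)) :
    sInf (I '' N) = sInf {y : ℝ | ∃ u : V, u ≠ 0 ∧
      y = sSup ((fun t : ℝ => I (t • u)) '' Ici (0 : ℝ))} := by
  refine csInf_eq_csInf_of_forall_exists_le ?_ ?_
  · rintro _ ⟨v, hv, rfl⟩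
    refine ⟨I v, ⟨v, hN v hv, ?_⟩, le_rfl⟩
    simpa using (sSup_ray_eq zero_le_one (by simpa using hmax v hv)).symm
  · rintro _ ⟨u, hu, rfl⟩
    obtain ⟨t, ht, htN, htmax⟩ := hproj u hu
    exact ⟨I (t • u), mem_image_of_mem I htN, (sSup_ray_eq ht.le htmax).ge⟩

theorem sInf_image_eq_sInf_mountainPass {V : Type*} [TopologicalSpace V] [AddCommGroup V]
    [Module ℝ V] [ContinuousSMul ℝ V] {I : V → ℝ} (hI : Continuous I) {N : Set V}
    (hmax : ∀ v ∈ N, ∀ s : ℝ, 0 ≤ s → I (s • v) ≤ I v)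
    (hneg : ∀ v ∈ N, ∃ R : ℝ, 0 ≤ R ∧ I (R • v) < 0)
    (hcross : ∀ γ : ℝ → V, ContinuousOn γ (Icc 0 1) → γ 0 = 0 → I (γ 1) < 0 →
      ∃ t ∈ Icc (0 : ℝ) 1, γ t ∈ N) :
    sInf (I '' N) = sInf {y : ℝ | ∃ γ : ℝ → V, ContinuousOn γ (Icc 0 1) ∧ γ 0 = 0 ∧
      I (γ 1) < 0 ∧ y = sSup ((fun t => I (γ t)) '' Icc (0 : ℝ) 1)} := by
  refine csInf_eq_csInf_of_forall_exists_le ?_ ?_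
  · rintro _ ⟨v, hv, rfl⟩
    obtain ⟨R, hR, hRv⟩ := hneg v hv
    refine ⟨_, ⟨fun t => (t * R) • v, by fun_prop, by simp, by simpa using hRv, rfl⟩, ?_⟩
    refine csSup_le ((nonempty_Icc.2 zero_le_one).image _) (forall_mem_image.2 fun t ht => ?_)
    exact hmax v hv _ (mul_nonneg ht.1 hR)
  · rintro _ ⟨γ, hγ, hγ0, hγ1, rfl⟩
    obtain ⟨t, ht, htN⟩ := hcross γ hγ hγ0 hγ1
    refine ⟨I (γ t), mem_image_of_mem I htN, le_csSup ?_ (mem_image_of_mem _ ht)⟩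
    exact (isCompact_Icc.image_of_continuousOn (hI.comp_continuousOn hγ)).bddAbove

theorem apply_smul_eq_fiberingMap {H : Type*} [NormedAddCommGroup H] [NormedSpace ℝ H] {p μ : ℝ}
    {I F P Q : H → ℝ}
    (hI : ∀ u, I u = 1 / 2 * ‖u‖ ^ 2 + 1 / 4 * F u - μ / p * P u - 1 / 6 * Q u)
    (hFh : ∀ t : ℝ, 0 ≤ t → ∀ u, F (t • u) = t ^ 4 * F u)
    (hPh : ∀ t : ℝ, 0 ≤ t → ∀ u, P (t • u) = t ^ p * P u)
    (hQh : ∀ t : ℝ, 0 ≤ t → ∀ u, Q (t • u) = t ^ 6 * Q u) {t : ℝ} (ht : 0 ≤ t) (u : H) :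
    I (t • u) = fiberingMap p (‖u‖ ^ 2) (F u) (μ * P u) (Q u) t := by
  rw [hI, hFh t ht, hPh t ht, hQh t ht, norm_smul, Real.norm_of_nonneg ht, fiberingMap]
  ring

theorem stmt_13_general {H : Type*} [NormedAddCommGroup H] [InnerProductSpace ℝ H]
    (p μ : ℝ) (hp4 : 4 < p) (hμ : 0 < μ)
    (I F P Q : H → ℝ) (hC1 : ContDiff ℝ 1 I)
    (hI : ∀ u, I u = 1 / 2 * ‖u‖ ^ 2 + 1 / 4 * F u - μ / p * P u - 1 / 6 * Q u)
    (hP0 : ∀ u, 0 ≤ P u) (hQ0 : ∀ u, 0 ≤ Q u)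
    (hFh : ∀ t : ℝ, 0 ≤ t → ∀ u, F (t • u) = t ^ 4 * F u)
    (hPh : ∀ t : ℝ, 0 ≤ t → ∀ u, P (t • u) = t ^ p * P u)
    (hQh : ∀ t : ℝ, 0 ≤ t → ∀ u, Q (t • u) = t ^ 6 * Q u)
    (hnz : ∀ u : H, u ≠ 0 → 0 < P u ∨ 0 < Q u)
    (N : Set H) (hN : N = {u : H | u ≠ 0 ∧ fderiv ℝ I u u = 0})
    (hproj : ∀ u : H, u ≠ 0 → ∃! t : ℝ, 0 < t ∧ t • u ∈ N ∧
        ∀ s : ℝ, 0 ≤ s → I (s • u) ≤ I (t • u))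
    (hsmall : ∃ ρ : ℝ, 0 < ρ ∧ ∀ u : H, u ≠ 0 → ‖u‖ < ρ →
        μ * P u + Q u < ‖u‖ ^ 2 + F u) :
    sInf (I '' N)
      = sInf {y : ℝ | ∃ u : H, u ≠ 0 ∧
          y = sSup ((fun t : ℝ => I (t • u)) '' Set.Ici (0 : ℝ))} ∧
    sInf (I '' N)
      = sInf {y : ℝ | ∃ γ : ℝ → H, ContinuousOn γ (Set.Icc 0 1) ∧ γ 0 = 0 ∧ I (γ 1) < 0 ∧
          y = sSup ((fun t => I (γ t)) '' Set.Icc (0 : ℝ) 1)} := by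
  have hray : ∀ t : ℝ, 0 ≤ t → ∀ u, I (t • u) = fiberingMap p (‖u‖ ^ 2) (F u) (μ * P u) (Q u) t :=
    fun t ht => apply_smul_eq_fiberingMap hI hFh hPh hQh ht
  have hI1 (u : H) : I u = fiberingMap p (‖u‖ ^ 2) (F u) (μ * P u) (Q u) 1 := by
    simpa using hray 1 zero_le_one u
  have hE (u : H) : fderiv ℝ I u u = ‖u‖ ^ 2 + F u - μ * P u - Q u :=
    (hC1.differentiable one_ne_zero u).fderiv_apply_self_eq (hasDerivAt_fiberingMap_one
      (by linarith) _ _ _ _) ((eventually_gt_nhds one_pos).mono fun t ht => hray t ht.le u)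
  have hμP (u : H) : 0 ≤ μ * P u := mul_nonneg hμ.le (hP0 u)
  have hmax : ∀ v ∈ N, ∀ s : ℝ, 0 ≤ s → I (s • v) ≤ I v := fun v hv s hs => by
    rw [hray s hs, hI1]
    exact fiberingMap_le_fiberingMap_one hp4.le (sq_nonneg _) (hμP v) (hQ0 v)
      (by linarith [hE v, (hN ▸ hv).2]) hs
  have hneg : ∀ v ∈ N, ∃ R : ℝ, 0 ≤ R ∧ I (R • v) < 0 := fun v hv => by
    obtain ⟨R, hR, hRv⟩ := exists_fiberingMap_neg hp4 (sq_nonneg _) (hμP v) (hQ0 v)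
      ((hnz v (hN ▸ hv).1).imp_left (mul_pos hμ)) (F v)
    exact ⟨R, hR, hray R hR v ▸ hRv⟩
  have hpos : ∀ᶠ u in 𝓝[≠] (0 : H), 0 < fderiv ℝ I u u := by
    obtain ⟨ρ, hρ, hsmall⟩ := hsmall
    refine eventually_nhdsWithin_iff.2 <| eventually_of_mem (Metric.ball_mem_nhds 0 hρ) ?_
    exact fun u hu hu0 => by linarith [hE u, hsmall u hu0 (mem_ball_zero_iff.1 hu)]
  have hneg_of_neg {u : H} (hu : I u < 0) : fderiv ℝ I u u < 0 := by
    linarith [hE u, hI1 u, div_four_le_fiberingMap_one hp4.le (sq_nonneg ‖u‖) (hμP u) (hQ0 u) (F u)]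
  refine ⟨sInf_image_eq_sInf_sSup_ray (fun v hv => (hN ▸ hv).1) hmax
    fun u hu => (hproj u hu).exists, sInf_image_eq_sInf_mountainPass hC1.continuous hmax hneg ?_⟩
  intro γ hγ hγ0 hγ1
  exact hN ▸ exists_mem_Icc_ne_and_eq_zero_of_path
    ((hC1.continuous_fderiv one_ne_zero).clm_apply continuous_id) (by simp) hpos hγ hγ0
    (hneg_of_neg hγ1)

theorem stmt_13 {H : Type*} [NormedAddCommGroup H] [InnerProductSpace ℝ H] [CompleteSpace H]
    (p μ : ℝ) (hp4 : 4 < p) (hp6 : p < 6) (hμ : 0 < μ)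
    (I F P Q : H → ℝ) (hC1 : ContDiff ℝ 1 I)
    (hI : ∀ u, I u = 1 / 2 * ‖u‖ ^ 2 + 1 / 4 * F u - μ / p * P u - 1 / 6 * Q u)
    (hF0 : ∀ u, 0 ≤ F u) (hP0 : ∀ u, 0 ≤ P u) (hQ0 : ∀ u, 0 ≤ Q u)
    (hFh : ∀ t : ℝ, 0 ≤ t → ∀ u, F (t • u) = t ^ 4 * F u)
    (hPh : ∀ t : ℝ, 0 ≤ t → ∀ u, P (t • u) = t ^ p * P u)
    (hQh : ∀ t : ℝ, 0 ≤ t → ∀ u, Q (t • u) = t ^ 6 * Q u)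
    (hnz : ∀ u : H, u ≠ 0 → 0 < P u ∨ 0 < Q u)
    (N : Set H) (hN : N = {u : H | u ≠ 0 ∧ fderiv ℝ I u u = 0})
    (hproj : ∀ u : H, u ≠ 0 → ∃! t : ℝ, 0 < t ∧ t • u ∈ N ∧
        ∀ s : ℝ, 0 ≤ s → I (s • u) ≤ I (t • u))
    (hsmall : ∃ ρ : ℝ, 0 < ρ ∧ ∀ u : H, u ≠ 0 → ‖u‖ < ρ →
        μ * P u + Q u < ‖u‖ ^ 2 + F u) :
    sInf (I '' N)
      = sInf {y : ℝ | ∃ u : H, u ≠ 0 ∧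
          y = sSup ((fun t : ℝ => I (t • u)) '' Set.Ici (0 : ℝ))} ∧
    sInf (I '' N)
      = sInf {y : ℝ | ∃ γ : ℝ → H, ContinuousOn γ (Set.Icc 0 1) ∧ γ 0 = 0 ∧ I (γ 1) < 0 ∧
          y = sSup ((fun t => I (γ t)) '' Set.Icc (0 : ℝ) 1)} :=
  stmt_13_general p μ hp4 hμ I F P Q hC1 hI hP0 hQ0 hFh hPh hQh hnz N hN hproj hsmall
end
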